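/- arXiv:1804.03978 — 5 statements merged into one kernel-verified Lean document; each statement's English description precedes it below -/
import Mathlib

section
/- Let n ≥ 4 be an even integer, μ > 0, and let p, κ be real numbers satisfying p_0(n+μ) < p < p_Fuj((n+μ-1)/2), 0 < κ ≤ (n+μ-1)p/2 − (n+μ+1)/2, and κ > 2/(p−1) − (n+μ−1)/2, and set q = (n−1)p/2 − (n+1)/2. Then there exists a constant C > 0 (depending only on n, μ, p, κ) such that for every y ∈ ℝ one has ∫_ℝ ⟨x⟩^{-pκ} ⟨x+y⟩^{-q-μ(p-1)/2} dx ≤ C ⟨y⟩^{-κ}. -/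
open MeasureTheory Real

/-- Japanese bracket `⟨y⟩ = 1 + |y|`. -/
noncomputable def jb (y : ℝ) : ℝ := 1 + |y|

/-- Strauss exponent: positive root of `(N-1)p² - (N+1)p - 2 = 0`. -/
noncomputable def p0 (N : ℝ) : ℝ := (N + 1 + Real.sqrt (N ^ 2 + 10 * N - 7)) / (2 * (N - 1))

/-- Fujita exponent. -/
noncomputable def pFuj (N : ℝ) : ℝ := 1 + 2 / N

lemma jb_one_le (y : ℝ) : 1 ≤ jb y := by simp [jb, abs_nonneg]
lemma jb_pos (y : ℝ) : 0 < jb y := lt_of_lt_of_le one_pos (jb_one_le y)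

/-- asymmetric pointwise bound, assuming `w ≤ 2u`. -/
lemma aux_pt (a b κ u v w : ℝ) (hκ : 0 < κ) (hκa : κ ≤ a) (hκb : κ ≤ b)
    (hu : 1 ≤ u) (hv : 1 ≤ v) (hw : 1 ≤ w) (h : w ≤ 2 * u) :
    u ^ (-a) * v ^ (-b) ≤
      2 ^ κ * w ^ (-κ) * (u ^ (-(a + b - κ)) + v ^ (-(a + b - κ))) := by
  have hu0 : (0:ℝ) < u := lt_of_lt_of_le one_pos hu
  have hv0 : (0:ℝ) < v := lt_of_lt_of_le one_pos hv
  have hw0 : (0:ℝ) < w := lt_of_lt_of_le one_pos hw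
  have hw2 : w / 2 ≤ u := by linarith
  have hw20 : (0:ℝ) < w / 2 := by linarith
  have hkey : u ^ (-κ) ≤ 2 ^ κ * w ^ (-κ) := by
    have h1 : u ^ (-κ) ≤ (w / 2) ^ (-κ) :=
      Real.rpow_le_rpow_of_nonpos hw20 hw2 (by linarith)
    have h2 : (w / 2 : ℝ) ^ (-κ) = 2 ^ κ * w ^ (-κ) := by
      rw [Real.div_rpow hw0.le (by norm_num), Real.rpow_neg hw0.le,
        Real.rpow_neg (by norm_num : (0:ℝ) ≤ 2)]
      field_simp
    linarith [h1, h2.le]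
  rcases le_total v u with hvu | huv
  · have e1 : u ^ (-a) = u ^ (-κ) * u ^ (-(a - κ)) := by
      rw [← Real.rpow_add hu0]; ring_nf
    have h3 : u ^ (-(a - κ)) ≤ v ^ (-(a - κ)) :=
      Real.rpow_le_rpow_of_nonpos hv0 hvu (by linarith)
    have h4 : v ^ (-(a - κ)) * v ^ (-b) = v ^ (-(a + b - κ)) := by
      rw [← Real.rpow_add hv0]; ring_nf
    have hvb : (0:ℝ) < v ^ (-b) := Real.rpow_pos_of_pos hv0 _
    have hua : (0:ℝ) ≤ u ^ (-(a - κ)) := (Real.rpow_pos_of_pos hu0 _).le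
    have hcw : (0:ℝ) ≤ 2 ^ κ * w ^ (-κ) :=
      mul_nonneg (Real.rpow_pos_of_pos (by norm_num) _).le (Real.rpow_pos_of_pos hw0 _).le
    calc u ^ (-a) * v ^ (-b) = u ^ (-κ) * (u ^ (-(a - κ)) * v ^ (-b)) := by rw [e1]; ring
      _ ≤ (2 ^ κ * w ^ (-κ)) * (v ^ (-(a - κ)) * v ^ (-b)) := by
          apply mul_le_mul hkey (by exact mul_le_mul_of_nonneg_right h3 hvb.le)
            (mul_nonneg hua hvb.le) hcw
      _ = 2 ^ κ * w ^ (-κ) * v ^ (-(a + b - κ)) := by rw [h4]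
      _ ≤ _ := by
          have : (0:ℝ) ≤ 2 ^ κ * w ^ (-κ) * u ^ (-(a + b - κ)) :=
            mul_nonneg hcw (Real.rpow_pos_of_pos hu0 _).le
          nlinarith
  · have h3 : v ^ (-b) ≤ u ^ (-b) :=
      Real.rpow_le_rpow_of_nonpos hu0 huv (by linarith)
    have e1 : u ^ (-a) * u ^ (-b) = u ^ (-κ) * u ^ (-(a + b - κ)) := by
      rw [← Real.rpow_add hu0, ← Real.rpow_add hu0]; ring_nf
    have hua : (0:ℝ) < u ^ (-a) := Real.rpow_pos_of_pos hu0 _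
    have hcw : (0:ℝ) ≤ 2 ^ κ * w ^ (-κ) :=
      mul_nonneg (Real.rpow_pos_of_pos (by norm_num) _).le (Real.rpow_pos_of_pos hw0 _).le
    calc u ^ (-a) * v ^ (-b) ≤ u ^ (-a) * u ^ (-b) := mul_le_mul_of_nonneg_left h3 hua.le
      _ = u ^ (-κ) * u ^ (-(a + b - κ)) := e1
      _ ≤ (2 ^ κ * w ^ (-κ)) * u ^ (-(a + b - κ)) :=
          mul_le_mul_of_nonneg_right hkey (Real.rpow_pos_of_pos hu0 _).le
      _ ≤ _ := by
          have : (0:ℝ) ≤ 2 ^ κ * w ^ (-κ) * v ^ (-(a + b - κ)) :=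
            mul_nonneg hcw (Real.rpow_pos_of_pos hv0 _).le
          nlinarith

/-- the key pointwise bound. -/
lemma key_pt (a b κ : ℝ) (hκ : 0 < κ) (hκa : κ ≤ a) (hκb : κ ≤ b) (x y : ℝ) :
    jb x ^ (-a) * jb (x + y) ^ (-b) ≤
      2 ^ κ * jb y ^ (-κ) * (jb x ^ (-(a + b - κ)) + jb (x + y) ^ (-(a + b - κ))) := by
  have hmax : jb y ≤ 2 * jb x ∨ jb y ≤ 2 * jb (x + y) := by
    have habs : |y| ≤ |x| + |x + y| := by
      calc |y| = |(x + y) - x| := by ring_nf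
        _ ≤ |x + y| + |x| := abs_sub _ _
        _ = |x| + |x + y| := by ring
    rcases le_total (jb x) (jb (x + y)) with h | h
    · right; simp only [jb] at *; linarith
    · left; simp only [jb] at *; linarith
  rcases hmax with h | h
  · exact aux_pt a b κ _ _ _ hκ hκa hκb (jb_one_le x) (jb_one_le (x+y)) (jb_one_le y) h
  · have := aux_pt b a κ (jb (x+y)) (jb x) (jb y) hκ hκb hκa
      (jb_one_le (x+y)) (jb_one_le x) (jb_one_le y) h
    calc jb x ^ (-a) * jb (x + y) ^ (-b) = jb (x+y) ^ (-b) * jb x ^ (-a) := by ring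
      _ ≤ 2 ^ κ * jb y ^ (-κ) * (jb (x+y) ^ (-(b + a - κ)) + jb x ^ (-(b + a - κ))) := this
      _ = _ := by ring_nf

lemma jb_integrable {r : ℝ} (hr : 1 < r) : Integrable (fun x : ℝ => jb x ^ (-r)) := by
  have h := integrable_one_add_norm (E := ℝ) (μ := volume) (r := r) (by simpa using hr)
  simpa [jb, Real.norm_eq_abs] using h

lemma jb_integrable_shift {r : ℝ} (hr : 1 < r) (y : ℝ) :
    Integrable (fun x : ℝ => jb (x + y) ^ (-r)) := by
  have h : MeasurePreserving (fun x : ℝ => x + y) volume volume :=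
    measurePreserving_add_right volume y
  have hm : AEStronglyMeasurable (fun x : ℝ => jb x ^ (-r)) volume :=
    (jb_integrable hr).aestronglyMeasurable
  exact (h.integrable_comp hm).mpr (jb_integrable hr)

lemma jb_integral_shift (r : ℝ) (y : ℝ) :
    (∫ x : ℝ, jb (x + y) ^ (-r)) = ∫ x : ℝ, jb x ^ (-r) :=
  integral_add_right_eq_self (fun x : ℝ => jb x ^ (-r)) y

/-- Lemma 3.2: under the standing assumptions on `p` and `κ`,
`∫_ℝ ⟨x⟩^{-pκ} ⟨x+y⟩^{-q-μ(p-1)/2} dx ≲ ⟨y⟩^{-κ}`. -/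
theorem lemma_first_integral (n : ℕ) (hn : 4 ≤ n) (hne : Even n) (μ : ℝ) (hμ : 0 < μ)
    (p κ q : ℝ)
    (hp₁ : p0 ((n : ℝ) + μ) < p) (hp₂ : p < pFuj (((n : ℝ) + μ - 1) / 2))
    (hκ₁ : 0 < κ) (hκ₂ : κ ≤ ((n : ℝ) + μ - 1) * p / 2 - ((n : ℝ) + μ + 1) / 2)
    (hκ₃ : κ > 2 / (p - 1) - ((n : ℝ) + μ - 1) / 2)
    (hq : q = ((n : ℝ) - 1) * p / 2 - ((n : ℝ) + 1) / 2) :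
    ∃ C > 0, ∀ y : ℝ,
      (∫ x : ℝ, jb x ^ (-(p * κ)) * jb (x + y) ^ (-q - μ * (p - 1) / 2)) ≤
        C * jb y ^ (-κ) := by
  set N : ℝ := (n : ℝ) + μ with hN
  have hn4 : (4:ℝ) ≤ (n:ℝ) := by exact_mod_cast hn
  have hN4 : 4 < N := by simp only [hN]; linarith
  -- p > 1
  have hp1 : 1 < p := by
    have hs : Real.sqrt (N ^ 2 + 10 * N - 7) ≥ N - 3 := by
      apply Real.le_sqrt' (by linarith) |>.mpr
      nlinarith
    have hp0 : 1 ≤ p0 N := by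
      rw [p0, le_div_iff₀ (by linarith : (0:ℝ) < 2 * (N - 1))]
      nlinarith
    linarith [hp₁]
  set a : ℝ := p * κ with ha
  set b : ℝ := q + μ * (p - 1) / 2 with hb
  have hκa : κ ≤ a := by
    simp only [ha]; nlinarith
  have hκb : κ ≤ b := by
    simp only [hb, hq]; simp only [hN] at hκ₂; linarith
  -- a + b - κ > 1
  have hr : 1 < a + b - κ := by
    have hp1' : 0 < p - 1 := by linarith
    have h2 : 2 / (p - 1) < κ + (N - 1) / 2 := by simp only [hN] at hκ₃ ⊢; linarith
    have h3 : 2 < (κ + (N - 1) / 2) * (p - 1) := by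
      rw [div_lt_iff₀ hp1'] at h2; linarith
    simp only [ha, hb, hq, hN] at *
    nlinarith
  set r : ℝ := a + b - κ with hrdef
  set I : ℝ := ∫ x : ℝ, jb x ^ (-r) with hI
  have hI0 : 0 ≤ I := integral_nonneg fun x => (Real.rpow_pos_of_pos (jb_pos x) _).le
  have hc2 : (0:ℝ) < 2 ^ κ := Real.rpow_pos_of_pos (by norm_num) κ
  refine ⟨2 ^ κ * (2 * I + 1), by positivity, fun y => ?_⟩
  have hjy : (0:ℝ) < jb y ^ (-κ) := Real.rpow_pos_of_pos (jb_pos y) _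
  have hgint : Integrable (fun x : ℝ =>
      2 ^ κ * jb y ^ (-κ) * (jb x ^ (-r) + jb (x + y) ^ (-r))) :=
    ((jb_integrable hr).add (jb_integrable_shift hr y)).const_mul _
  have hmono : (∫ x : ℝ, jb x ^ (-(p * κ)) * jb (x + y) ^ (-q - μ * (p - 1) / 2)) ≤
      ∫ x : ℝ, 2 ^ κ * jb y ^ (-κ) * (jb x ^ (-r) + jb (x + y) ^ (-r)) := by
    apply integral_mono_of_nonneg
    · exact ae_of_all _ fun x =>
        mul_nonneg (Real.rpow_pos_of_pos (jb_pos x) _).le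
          (Real.rpow_pos_of_pos (jb_pos (x + y)) _).le
    · exact hgint
    · refine ae_of_all _ fun x => ?_
      have hexp : -q - μ * (p - 1) / 2 = -b := by simp only [hb]; ring
      rw [hexp]
      exact key_pt a b κ hκ₁ hκa hκb x y
  have hval : (∫ x : ℝ, 2 ^ κ * jb y ^ (-κ) * (jb x ^ (-r) + jb (x + y) ^ (-r))) =
      2 ^ κ * jb y ^ (-κ) * (I + I) := by
    rw [integral_const_mul, integral_add (jb_integrable hr) (jb_integrable_shift hr y),
      jb_integral_shift r y]
  have hfinal : 2 ^ κ * jb y ^ (-κ) * (I + I) ≤ 2 ^ κ * (2 * I + 1) * jb y ^ (-κ) := by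
    nlinarith
  calc (∫ x : ℝ, jb x ^ (-(p * κ)) * jb (x + y) ^ (-q - μ * (p - 1) / 2)) ≤
      ∫ x : ℝ, 2 ^ κ * jb y ^ (-κ) * (jb x ^ (-r) + jb (x + y) ^ (-r)) := hmono
    _ = 2 ^ κ * jb y ^ (-κ) * (I + I) := hval
    _ ≤ _ := hfinal
end

section
/- Let n ≥ 4 be an even integer, μ > 0, and let p, κ be real numbers satisfying p_0(n+μ) < p < p_Fuj((n+μ-1)/2), 0 < κ ≤ (n+μ-1)p/2 − (n+μ+1)/2, and κ > 2/(p−1) − (n+μ−1)/2, and set q = (n−1)p/2 − (n+1)/2. Assume in addition that q ≥ 1/2. Then there exists a constant C > 0 (depending only on n, μ, p, κ) such that for every y ≥ 0 one has ∫_{-y}^{-y/2} ⟨x⟩^{-κp − μ(p-1)/2} ⟨x+y⟩^{-q+1/2} (x+y)^{-1/2} dx ≤ C ⟨y⟩^{-κ}. -/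
open MeasureTheory Real

set_option maxHeartbeats 1600000 in
/-- Lemma 3.3 (case `q ≥ 1/2`):
`∫_{-y}^{-y/2} ⟨x⟩^{-κp-μ(p-1)/2} ⟨x+y⟩^{-q+1/2} (x+y)^{-1/2} dx ≲ ⟨y⟩^{-κ}`. -/
theorem lemma_second_integral_q_ge_half (n : ℕ) (hn : 4 ≤ n) (hne : Even n)
    (μ : ℝ) (hμ : 0 < μ) (p κ q : ℝ)
    (hp₁ : p0 ((n : ℝ) + μ) < p) (hp₂ : p < pFuj (((n : ℝ) + μ - 1) / 2))
    (hκ₁ : 0 < κ) (hκ₂ : κ ≤ ((n : ℝ) + μ - 1) * p / 2 - ((n : ℝ) + μ + 1) / 2)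
    (hκ₃ : κ > 2 / (p - 1) - ((n : ℝ) + μ - 1) / 2)
    (hq : q = ((n : ℝ) - 1) * p / 2 - ((n : ℝ) + 1) / 2)
    (hq' : (1 : ℝ) / 2 ≤ q) :
    ∃ C > 0, ∀ y : ℝ, 0 ≤ y →
      (∫ x in (-y)..(-y / 2),
          jb x ^ (-(κ * p) - μ * (p - 1) / 2) * jb (x + y) ^ (-q + 1 / 2) *
            (x + y) ^ (-(1 / 2 : ℝ))) ≤
        C * jb y ^ (-κ) := by
  have hn4 : (4 : ℝ) ≤ (n : ℝ) := by exact_mod_cast hn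
  have hp1 : 1 < p := by nlinarith [hq' , hq.symm ▸ hq']
  have hd : 0 < p - 1 := by linarith
  obtain ⟨a, ha⟩ : ∃ a : ℝ, a = κ * p + μ * (p - 1) / 2 := ⟨_, rfl⟩
  have ha0 : 0 < a := by
    have h1 : 0 < κ * p := mul_pos hκ₁ (by linarith)
    have h2 : 0 < μ * (p - 1) / 2 := by positivity
    rw [ha]; linarith
  obtain ⟨σ, hσdef⟩ : ∃ s : ℝ, s = a - κ := ⟨_, rfl⟩
  have hσ : 0 < σ := by
    have h1 : 0 < κ * (p - 1) := mul_pos hκ₁ hd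
    have h2 : 0 < μ * (p - 1) / 2 := by positivity
    rw [hσdef, ha]; nlinarith
  have hσq : 1 - q ≤ σ := by
    have h2 : 2 < (κ + ((n : ℝ) + μ - 1) / 2) * (p - 1) :=
      (div_lt_iff₀ hd).mp (by linarith)
    rw [hσdef, ha, hq]; nlinarith
  have hB : -q + 1 / 2 ≤ 0 := by linarith
  have hBq : -q + 1 / 2 + -(1 / 2) ≤ σ - 1 := by linarith
  -- the auxiliary function
  obtain ⟨ψ, hψdef⟩ : ∃ f : ℝ → ℝ, f = fun t => (1 + t) ^ (-q + 1 / 2) * t ^ (-(1 / 2 : ℝ)) :=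
    ⟨_, rfl⟩
  have hψmeas : Measurable ψ := by rw [hψdef]; fun_prop
  have hhalf : (-1 : ℝ) < -(1 / 2) := by norm_num
  have hψle : ∀ t : ℝ, 0 ≤ t → ψ t ≤ t ^ (-(1 / 2 : ℝ)) := by
    intro t ht
    rw [hψdef]
    have := rpow_le_one_of_one_le_of_nonpos (by linarith : (1 : ℝ) ≤ 1 + t) hB
    calc (1 + t) ^ (-q + 1 / 2) * t ^ (-(1 / 2 : ℝ)) ≤ 1 * t ^ (-(1 / 2 : ℝ)) :=
          mul_le_mul_of_nonneg_right this (rpow_nonneg ht _)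
      _ = t ^ (-(1 / 2 : ℝ)) := one_mul _
  have hψnn : ∀ t : ℝ, 0 ≤ t → 0 ≤ ψ t := by
    intro t ht
    rw [hψdef]
    exact mul_nonneg (rpow_nonneg (by linarith) _) (rpow_nonneg ht _)
  have hψint : ∀ c d : ℝ, 0 ≤ c → c ≤ d → IntervalIntegrable ψ volume c d := by
    intro c d hc hcd
    refine (intervalIntegral.intervalIntegrable_rpow' (a := c) (b := d) hhalf).mono_fun
      hψmeas.aestronglyMeasurable ?_
    refine ae_restrict_of_forall_mem measurableSet_uIoc fun t ht => ?_
    rw [Set.uIoc_of_le hcd] at ht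
    have ht0 : 0 ≤ t := le_trans hc ht.1.le
    show ‖ψ t‖ ≤ ‖t ^ (-(1 / 2 : ℝ))‖
    rw [Real.norm_eq_abs, Real.norm_eq_abs, abs_of_nonneg (hψnn t ht0),
      abs_of_nonneg (rpow_nonneg ht0 _)]
    exact hψle t ht0
  -- bound on ∫ ψ over [0, Y] pieces via t^(-1/2)
  have hsmall : ∀ Y : ℝ, 0 ≤ Y → Y ≤ 1 → (∫ t in (0 : ℝ)..Y, ψ t) ≤ 2 := by
    intro Y hY0 hY1
    have h1 : (∫ t in (0 : ℝ)..Y, ψ t) ≤ ∫ t in (0 : ℝ)..Y, t ^ (-(1 / 2 : ℝ)) := by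
      refine intervalIntegral.integral_mono_on hY0 (hψint 0 Y le_rfl hY0)
        (intervalIntegral.intervalIntegrable_rpow' hhalf) fun t ht => hψle t ht.1
    have h2 : (∫ t in (0 : ℝ)..Y, t ^ (-(1 / 2 : ℝ)))
        = (Y ^ (-(1 / 2 : ℝ) + 1) - (0 : ℝ) ^ (-(1 / 2 : ℝ) + 1)) / (-(1 / 2 : ℝ) + 1) :=
      integral_rpow (Or.inl hhalf)
    have h3 : (0 : ℝ) ^ (-(1 / 2 : ℝ) + 1) = 0 := by
      rw [Real.zero_rpow]; norm_num
    have h4 : Y ^ (-(1 / 2 : ℝ) + 1) ≤ 1 := rpow_le_one hY0 hY1 (by norm_num)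
    rw [h2, h3] at h1
    calc (∫ t in (0 : ℝ)..Y, ψ t) ≤ (Y ^ (-(1 / 2 : ℝ) + 1) - 0) / (-(1 / 2 : ℝ) + 1) := h1
      _ ≤ 1 / (1 / 2) := by
          rw [show -(1 / 2 : ℝ) + 1 = 1 / 2 by norm_num]
          exact (div_le_div_iff_of_pos_right (by norm_num)).mpr (by linarith)
      _ = 2 := by norm_num
  refine ⟨2 ^ a * (2 + 1 / σ), by positivity, fun y hy => ?_⟩
  have hy1 : (0 : ℝ) < 1 + y := by linarith
  have hjy : jb y = 1 + y := by rw [jb, abs_of_nonneg hy]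
  have hy2 : -y ≤ -y / 2 := by linarith
  obtain ⟨K, hK⟩ : ∃ k : ℝ, k = ((1 + y) / 2) ^ (-a) := ⟨_, rfl⟩
  have hK0 : 0 ≤ K := by rw [hK]; positivity
  rw [show -(κ * p) - μ * (p - 1) / 2 = -a by rw [ha]; ring]
  -- Step 1: pointwise bound & translation
  have hψy : IntervalIntegrable (fun x => ψ (x + y)) volume (-y) (-y / 2) := by
    have h1 := (hψint 0 (y / 2) le_rfl (by linarith)).comp_add_right y
    rwa [show (0 : ℝ) - y = -y by ring, show y / 2 - y = -y / 2 by ring] at h1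
  have hKψint : IntegrableOn (fun x => K * ψ (x + y)) (Set.Ioc (-y) (-y / 2)) volume := by
    have h2 := hψy.const_mul K
    exact (intervalIntegrable_iff_integrableOn_Ioc_of_le hy2).mp h2
  have key : (∫ x in (-y)..(-y / 2),
      jb x ^ (-a) * jb (x + y) ^ (-q + 1 / 2) * (x + y) ^ (-(1 / 2 : ℝ)))
      ≤ K * ∫ t in (0 : ℝ)..(y / 2), ψ t := by
    rw [intervalIntegral.integral_of_le hy2]
    have step : (∫ x in Set.Ioc (-y) (-y / 2),
        jb x ^ (-a) * jb (x + y) ^ (-q + 1 / 2) * (x + y) ^ (-(1 / 2 : ℝ)))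
        ≤ ∫ x in Set.Ioc (-y) (-y / 2), K * ψ (x + y) := by
      refine integral_mono_of_nonneg ?_ hKψint ?_
      · refine ae_restrict_of_forall_mem measurableSet_Ioc fun x hx => ?_
        have hxy : (0 : ℝ) < x + y := by linarith [hx.1]
        have hjx : (0 : ℝ) ≤ jb x := by rw [jb]; positivity
        have hjxy : (0 : ℝ) ≤ jb (x + y) := by rw [jb]; positivity
        exact mul_nonneg (mul_nonneg (rpow_nonneg hjx _) (rpow_nonneg hjxy _))
          (rpow_nonneg hxy.le _)
      · refine ae_restrict_of_forall_mem measurableSet_Ioc fun x hx => ?_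
        obtain ⟨hx1, hx2⟩ := hx
        have hxy : (0 : ℝ) < x + y := by linarith
        have hxneg : x ≤ 0 := by linarith
        have hjx : (1 + y) / 2 ≤ jb x := by
          rw [jb, abs_of_nonpos hxneg]; linarith
        have h1 : jb x ^ (-a) ≤ K := by
          rw [hK]
          exact rpow_le_rpow_of_nonpos (by linarith : (0 : ℝ) < (1 + y) / 2) hjx
            (by linarith : -a ≤ 0)
        have h2 : jb (x + y) ^ (-q + 1 / 2) * (x + y) ^ (-(1 / 2 : ℝ)) = ψ (x + y) := by
          rw [hψdef, jb, abs_of_pos hxy]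
        calc jb x ^ (-a) * jb (x + y) ^ (-q + 1 / 2) * (x + y) ^ (-(1 / 2 : ℝ))
            = jb x ^ (-a) * ψ (x + y) := by rw [mul_assoc, h2]
          _ ≤ K * ψ (x + y) :=
              mul_le_mul_of_nonneg_right h1 (hψnn (x + y) hxy.le)
    refine le_trans step (le_of_eq ?_)
    rw [← intervalIntegral.integral_of_le hy2, intervalIntegral.integral_const_mul]
    congr 1
    rw [intervalIntegral.integral_comp_add_right (fun t => ψ t) y,
      show -y + y = (0 : ℝ) by ring, show -y / 2 + y = y / 2 by ring]
  -- Step 2: bound the model integral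
  have hJ : (∫ t in (0 : ℝ)..(y / 2), ψ t) ≤ 2 + (1 + y) ^ σ / σ := by
    rcases le_or_gt (y / 2) 1 with hc | hc
    · have := hsmall (y / 2) (by linarith) hc
      have h0 : 0 ≤ (1 + y) ^ σ / σ := by positivity
      linarith
    · have h01 : IntervalIntegrable ψ volume 0 1 := hψint 0 1 le_rfl zero_le_one
      have h1Y : IntervalIntegrable ψ volume 1 (y / 2) := hψint 1 (y / 2) zero_le_one hc.le
      rw [← intervalIntegral.integral_add_adjacent_intervals h01 h1Y]
      have hA1 : (∫ t in (0 : ℝ)..1, ψ t) ≤ 2 := hsmall 1 zero_le_one le_rfl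
      have hA2 : (∫ t in (1 : ℝ)..(y / 2), ψ t) ≤ (1 + y) ^ σ / σ := by
        have hσ1 : (-1 : ℝ) < σ - 1 := by linarith
        have hpt : ∀ t ∈ Set.Icc (1 : ℝ) (y / 2), ψ t ≤ t ^ (σ - 1) := by
          intro t ht
          have ht1 : (1 : ℝ) ≤ t := ht.1
          have ht0 : (0 : ℝ) < t := by linarith
          rw [hψdef]
          calc (1 + t) ^ (-q + 1 / 2) * t ^ (-(1 / 2 : ℝ))
              ≤ t ^ (-q + 1 / 2) * t ^ (-(1 / 2 : ℝ)) :=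
                mul_le_mul_of_nonneg_right
                  (rpow_le_rpow_of_nonpos ht0 (by linarith) hB) (rpow_nonneg ht0.le _)
            _ = t ^ (-q + 1 / 2 + -(1 / 2)) := (Real.rpow_add ht0 _ _).symm
            _ ≤ t ^ (σ - 1) := rpow_le_rpow_of_exponent_le ht1 hBq
        have h1 : (∫ t in (1 : ℝ)..(y / 2), ψ t) ≤ ∫ t in (1 : ℝ)..(y / 2), t ^ (σ - 1) :=
          intervalIntegral.integral_mono_on hc.le h1Y (intervalIntegral.intervalIntegrable_rpow' hσ1) hpt
        have h2 : (∫ t in (1 : ℝ)..(y / 2), t ^ (σ - 1))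
            = ((y / 2) ^ (σ - 1 + 1) - (1 : ℝ) ^ (σ - 1 + 1)) / (σ - 1 + 1) :=
          integral_rpow (Or.inl hσ1)
        have h3 : (y / 2) ^ (σ - 1 + 1) ≤ (1 + y) ^ σ := by
          rw [show σ - 1 + 1 = σ by ring]
          exact rpow_le_rpow (by linarith) (by linarith) hσ.le
        have h4 : (1 : ℝ) ^ (σ - 1 + 1) = 1 := Real.one_rpow _
        refine le_trans h1 ?_
        rw [h2, h4]
        refine le_trans ((div_le_div_iff_of_pos_right (by linarith : (0:ℝ) < σ - 1 + 1)).mpr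
          (by linarith : (y / 2) ^ (σ - 1 + 1) - 1 ≤ (1 + y) ^ σ)) ?_
        rw [show σ - 1 + 1 = σ by ring]
      linarith
    -- end cases
  -- Step 3: combine
  have hone : (1 : ℝ) ≤ (1 + y) ^ σ := by
    have := rpow_le_rpow zero_le_one (by linarith : (1:ℝ) ≤ 1 + y) hσ.le
    rwa [Real.one_rpow] at this
  have hfinal : K * (2 + (1 + y) ^ σ / σ) ≤ 2 ^ a * (2 + 1 / σ) * jb y ^ (-κ) := by
    have hKval : K * (1 + y) ^ σ = 2 ^ a * (1 + y) ^ (-κ) := by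
      rw [hK, Real.div_rpow hy1.le (by norm_num : (0 : ℝ) ≤ 2),
        Real.rpow_neg (by norm_num : (0 : ℝ) ≤ 2), div_eq_mul_inv, inv_inv,
        mul_comm ((1 + y) ^ (-a)) (2 ^ a), mul_assoc, ← Real.rpow_add hy1,
        show -a + σ = -κ by rw [hσdef]; ring]
    have h5 : K * (2 + (1 + y) ^ σ / σ) ≤ K * ((2 + 1 / σ) * (1 + y) ^ σ) := by
      apply mul_le_mul_of_nonneg_left ?_ hK0
      have h6 : (2 : ℝ) ≤ 2 * (1 + y) ^ σ := by linarith
      have h7 : (1 + y) ^ σ / σ = (1 / σ) * (1 + y) ^ σ := by ring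
      rw [h7]; linarith [h6]
    calc K * (2 + (1 + y) ^ σ / σ) ≤ K * ((2 + 1 / σ) * (1 + y) ^ σ) := h5
      _ = (2 + 1 / σ) * (K * (1 + y) ^ σ) := by ring
      _ = (2 + 1 / σ) * (2 ^ a * (1 + y) ^ (-κ)) := by rw [hKval]
      _ = 2 ^ a * (2 + 1 / σ) * jb y ^ (-κ) := by rw [hjy]; ring
  calc (∫ x in (-y)..(-y / 2),
        jb x ^ (-a) * jb (x + y) ^ (-q + 1 / 2) * (x + y) ^ (-(1 / 2 : ℝ)))
      ≤ K * ∫ t in (0 : ℝ)..(y / 2), ψ t := key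
    _ ≤ K * (2 + (1 + y) ^ σ / σ) := mul_le_mul_of_nonneg_left hJ hK0
    _ ≤ 2 ^ a * (2 + 1 / σ) * jb y ^ (-κ) := hfinal
end

section
/- Let n ≥ 4 be an even integer, μ > 0, and let p, κ be real numbers satisfying p_0(n+μ) < p < p_Fuj((n+μ-1)/2), 0 < κ ≤ (n+μ-1)p/2 − (n+μ+1)/2, and κ > 2/(p−1) − (n+μ−1)/2, and set q = (n−1)p/2 − (n+1)/2. Assume in addition that 0 ≤ q < 1/2. Then there exists a constant C > 0 (depending only on n, μ, p, κ) such that for every y ≥ 0 one has ∫_{-y}^{-y/2} ⟨x⟩^{-κp − μ(p-1)/2 + 1/2} ⟨x+y⟩^{-q} (x+y)^{-1/2} dx ≤ C ⟨y⟩^{-κ}. -/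
open MeasureTheory Real

set_option maxHeartbeats 1600000 in
/-- Lemma 3.4 (case `0 ≤ q < 1/2`):
`∫_{-y}^{-y/2} ⟨x⟩^{-κp-μ(p-1)/2+1/2} ⟨x+y⟩^{-q} (x+y)^{-1/2} dx ≲ ⟨y⟩^{-κ}`. -/
theorem lemma_second_integral_q_lt_half (n : ℕ) (hn : 4 ≤ n) (hne : Even n)
    (μ : ℝ) (hμ : 0 < μ) (p κ q : ℝ)
    (hp₁ : p0 ((n : ℝ) + μ) < p) (hp₂ : p < pFuj (((n : ℝ) + μ - 1) / 2))
    (hκ₁ : 0 < κ) (hκ₂ : κ ≤ ((n : ℝ) + μ - 1) * p / 2 - ((n : ℝ) + μ + 1) / 2)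
    (hκ₃ : κ > 2 / (p - 1) - ((n : ℝ) + μ - 1) / 2)
    (hq : q = ((n : ℝ) - 1) * p / 2 - ((n : ℝ) + 1) / 2)
    (hq₀ : 0 ≤ q) (hq₁ : q < 1 / 2) :
    ∃ C > 0, ∀ y : ℝ, 0 ≤ y →
      (∫ x in (-y)..(-y / 2),
          jb x ^ (-(κ * p) - μ * (p - 1) / 2 + 1 / 2) * jb (x + y) ^ (-q) *
            (x + y) ^ (-(1 / 2 : ℝ))) ≤
        C * jb y ^ (-κ) := by
  have hn4 : (4 : ℝ) ≤ (n : ℝ) := by exact_mod_cast hn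
  have hq0' : (0 : ℝ) ≤ ((n : ℝ) - 1) * p / 2 - ((n : ℝ) + 1) / 2 := hq ▸ hq₀
  have hp1 : 1 < p := by nlinarith
  have hkey' : 2 < (κ + ((n : ℝ) + μ - 1) / 2) * (p - 1) := by
    have h := hκ₃
    have h2 : 2 / (p - 1) < κ + ((n : ℝ) + μ - 1) / 2 := by linarith
    exact (div_lt_iff₀ (by linarith)).mp h2
  have hkey : 1 - q < κ * (p - 1) + μ * (p - 1) / 2 := by nlinarith
  set a : ℝ := -(κ * p) - μ * (p - 1) / 2 + 1 / 2 with ha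
  have hkp : κ * p = κ * (p - 1) + κ := by ring
  have ha0 : a ≤ 0 := by rw [ha]; nlinarith
  set r : ℝ := q + 1 / 2 with hr
  have hr0 : 0 < r := by rw [hr]; linarith
  have hr1 : r < 1 := by rw [hr]; linarith
  have hexp : a + (1 - r) ≤ -κ := by rw [ha, hr]; nlinarith
  refine ⟨(2 : ℝ) ^ (-a) / (1 - r),
    div_pos (Real.rpow_pos_of_pos two_pos _) (by linarith), fun y hy => ?_⟩
  have hjbnn : ∀ t : ℝ, 0 ≤ jb t := fun t => by
    simp only [jb]; positivity
  have hjy : jb y = 1 + y := by simp [jb, abs_of_nonneg hy]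
  have h1y : (1 : ℝ) ≤ 1 + y := by linarith
  have hRHS : (0 : ℝ) ≤ (2 : ℝ) ^ (-a) / (1 - r) * jb y ^ (-κ) := by
    rw [hjy]
    exact mul_nonneg (div_nonneg (Real.rpow_nonneg (by norm_num) _) (by linarith))
      (Real.rpow_nonneg (by linarith) _)
  by_cases hfint : IntervalIntegrable
      (fun x => jb x ^ a * jb (x + y) ^ (-q) * (x + y) ^ (-(1 / 2 : ℝ)))
      volume (-y) (-y / 2)
  swap
  · rw [intervalIntegral.integral_undef hfint]; exact hRHS
  -- the dominating function
  have hgint : IntervalIntegrable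
      (fun x => (1 + y / 2) ^ a * (x + y) ^ (-r)) volume (-y) (-y / 2) := by
    have base : IntervalIntegrable (fun x : ℝ => x ^ (-r)) volume 0 (y / 2) :=
      intervalIntegral.intervalIntegrable_rpow' (by linarith)
    have h2 := (base.comp_add_right y).const_mul ((1 + y / 2) ^ a)
    rw [show (0 : ℝ) - y = -y by ring, show y / 2 - y = -y / 2 by ring] at h2
    exact h2
  have hmono : ∀ x ∈ Set.Icc (-y) (-y / 2),
      jb x ^ a * jb (x + y) ^ (-q) * (x + y) ^ (-(1 / 2 : ℝ)) ≤
        (1 + y / 2) ^ a * (x + y) ^ (-r) := by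
    intro x hx
    obtain ⟨hx1, hx2⟩ := hx
    have hxy : 0 ≤ x + y := by linarith
    rcases eq_or_lt_of_le hxy with h0 | h0
    · rw [← h0, Real.zero_rpow (by norm_num : (-(1 / 2 : ℝ)) ≠ 0),
        Real.zero_rpow (by linarith : -r ≠ 0)]
      simp
    · have hx0 : x ≤ 0 := by linarith
      have hbx : 1 + y / 2 ≤ jb x := by
        simp only [jb]; rw [abs_of_nonpos hx0]; linarith
      have h1 : jb x ^ a ≤ (1 + y / 2) ^ a :=
        Real.rpow_le_rpow_of_nonpos (by linarith) hbx ha0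
      have h2 : jb (x + y) ^ (-q) ≤ (x + y) ^ (-q) := by
        refine Real.rpow_le_rpow_of_nonpos h0 ?_ (by linarith)
        simp only [jb]; rw [abs_of_nonneg hxy]; linarith
      have h3 : (x + y) ^ (-q) * (x + y) ^ (-(1 / 2 : ℝ)) = (x + y) ^ (-r) := by
        rw [← Real.rpow_add h0]; congr 1; rw [hr]; ring
      calc jb x ^ a * jb (x + y) ^ (-q) * (x + y) ^ (-(1 / 2 : ℝ))
          ≤ (1 + y / 2) ^ a * ((x + y) ^ (-q) * (x + y) ^ (-(1 / 2 : ℝ))) := by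
            rw [mul_assoc]
            refine mul_le_mul h1
              (mul_le_mul_of_nonneg_right h2 (Real.rpow_nonneg hxy _))
              (mul_nonneg (Real.rpow_nonneg (hjbnn _) _) (Real.rpow_nonneg hxy _))
              (Real.rpow_nonneg (by linarith) _)
        _ = (1 + y / 2) ^ a * (x + y) ^ (-r) := by rw [h3]
  have hstep1 : (∫ x in (-y)..(-y / 2),
      jb x ^ a * jb (x + y) ^ (-q) * (x + y) ^ (-(1 / 2 : ℝ))) ≤
      ∫ x in (-y)..(-y / 2), (1 + y / 2) ^ a * (x + y) ^ (-r) :=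
    intervalIntegral.integral_mono_on (by linarith) hfint hgint hmono
  have hcomp : (∫ x in (-y)..(-y / 2), (x + y) ^ (-r)) =
      (y / 2) ^ (1 - r) / (1 - r) := by
    have h1 : (∫ x in (-y)..(-y / 2), (x + y) ^ (-r)) =
        ∫ x in (0 : ℝ)..(y / 2), x ^ (-r) := by
      rw [intervalIntegral.integral_comp_add_right (fun x : ℝ => x ^ (-r)) y,
        show -y + y = (0 : ℝ) by ring, show -y / 2 + y = y / 2 by ring]
    rw [h1, integral_rpow (Or.inl (by linarith : (-1 : ℝ) < -r)),
      Real.zero_rpow (ne_of_gt (by linarith : (0 : ℝ) < -r + 1))]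
    rw [show -r + 1 = 1 - r by ring]
    ring
  have hstep2 : (∫ x in (-y)..(-y / 2), (1 + y / 2) ^ a * (x + y) ^ (-r)) =
      (1 + y / 2) ^ a * ((y / 2) ^ (1 - r) / (1 - r)) := by
    rw [intervalIntegral.integral_const_mul, hcomp]
  have hA : (1 + y / 2) ^ a ≤ (2 : ℝ) ^ (-a) * (1 + y) ^ a := by
    have h1 : (1 + y / 2 : ℝ) ^ a ≤ ((1 + y) / 2) ^ a :=
      Real.rpow_le_rpow_of_nonpos (by linarith) (by linarith) ha0
    have h2 : ((1 + y) / 2 : ℝ) ^ a = (1 + y) ^ a / 2 ^ a :=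
      Real.div_rpow (by linarith) (by norm_num) a
    have h3 : (2 : ℝ) ^ (-a) = ((2 : ℝ) ^ a)⁻¹ := Real.rpow_neg (by norm_num) a
    rw [h3]
    calc (1 + y / 2 : ℝ) ^ a ≤ (1 + y) ^ a / 2 ^ a := h2 ▸ h1
      _ = ((2 : ℝ) ^ a)⁻¹ * (1 + y) ^ a := by ring
  have hB : (y / 2 : ℝ) ^ (1 - r) ≤ (1 + y) ^ (1 - r) :=
    Real.rpow_le_rpow (by linarith) (by linarith) (by linarith)
  have hfinal : (1 + y / 2) ^ a * ((y / 2) ^ (1 - r) / (1 - r)) ≤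
      (2 : ℝ) ^ (-a) / (1 - r) * jb y ^ (-κ) := by
    rw [hjy]
    calc (1 + y / 2) ^ a * ((y / 2) ^ (1 - r) / (1 - r))
        ≤ ((2 : ℝ) ^ (-a) * (1 + y) ^ a) * ((1 + y) ^ (1 - r) / (1 - r)) := by
          refine mul_le_mul hA ((div_le_div_iff_of_pos_right (by linarith)).mpr hB)
            (div_nonneg (Real.rpow_nonneg (by linarith) _) (by linarith))
            (mul_nonneg (Real.rpow_nonneg (by norm_num) _)
              (Real.rpow_nonneg (by linarith) _))
      _ = (2 : ℝ) ^ (-a) / (1 - r) * ((1 + y) ^ a * (1 + y) ^ (1 - r)) := by ring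
      _ = (2 : ℝ) ^ (-a) / (1 - r) * (1 + y) ^ (a + (1 - r)) := by
          rw [← Real.rpow_add (by linarith : (0:ℝ) < 1 + y)]
      _ ≤ (2 : ℝ) ^ (-a) / (1 - r) * (1 + y) ^ (-κ) := by
          refine mul_le_mul_of_nonneg_left
            (Real.rpow_le_rpow_of_exponent_le h1y hexp)
            (div_nonneg (Real.rpow_nonneg (by norm_num) _) (by linarith))
  calc (∫ x in (-y)..(-y / 2),
        jb x ^ a * jb (x + y) ^ (-q) * (x + y) ^ (-(1 / 2 : ℝ)))
      ≤ ∫ x in (-y)..(-y / 2), (1 + y / 2) ^ a * (x + y) ^ (-r) := hstep1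
    _ = (1 + y / 2) ^ a * ((y / 2) ^ (1 - r) / (1 - r)) := hstep2
    _ ≤ (2 : ℝ) ^ (-a) / (1 - r) * jb y ^ (-κ) := hfinal
end

section
/- Let n ≥ 4 be an even integer, μ > 0, and let p, κ be real numbers satisfying p_0(n+μ) < p < p_Fuj((n+μ-1)/2), 0 < κ ≤ (n+μ-1)p/2 − (n+μ+1)/2, and κ > 2/(p−1) − (n+μ−1)/2, and set q = (n−1)p/2 − (n+1)/2. Assume in addition that −1/2 ≤ q < 0. Then there exists a constant C > 0 (depending only on n, μ, p, κ) such that for every y ≥ 0 one has ∫_{-y}^{-y/2} ⟨x⟩^{-κp − μ(p-1)/2 + 1} ⟨x+y⟩^{-q-1/2} (x+y)^{-1/2} dx ≤ C ⟨y⟩^{-κ}. -/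
open MeasureTheory Real

/-- Lemma 3.5 (case `-1/2 ≤ q < 0`):
`∫_{-y}^{-y/2} ⟨x⟩^{-κp-μ(p-1)/2+1} ⟨x+y⟩^{-q-1/2} (x+y)^{-1/2} dx ≲ ⟨y⟩^{-κ}`. -/
theorem lemma_second_integral_q_neg (n : ℕ) (hn : 4 ≤ n) (hne : Even n)
    (μ : ℝ) (hμ : 0 < μ) (p κ q : ℝ)
    (hp₁ : p0 ((n : ℝ) + μ) < p) (hp₂ : p < pFuj (((n : ℝ) + μ - 1) / 2))
    (hκ₁ : 0 < κ) (hκ₂ : κ ≤ ((n : ℝ) + μ - 1) * p / 2 - ((n : ℝ) + μ + 1) / 2)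
    (hκ₃ : κ > 2 / (p - 1) - ((n : ℝ) + μ - 1) / 2)
    (hq : q = ((n : ℝ) - 1) * p / 2 - ((n : ℝ) + 1) / 2)
    (hq₀ : -(1 / 2 : ℝ) ≤ q) (hq₁ : q < 0) :
    ∃ C > 0, ∀ y : ℝ, 0 ≤ y →
      (∫ x in (-y)..(-y / 2),
          jb x ^ (-(κ * p) - μ * (p - 1) / 2 + 1) * jb (x + y) ^ (-q - 1 / 2) *
            (x + y) ^ (-(1 / 2 : ℝ))) ≤
        C * jb y ^ (-κ) := by
  set a : ℝ := -(κ * p) - μ * (p - 1) / 2 + 1 with ha_def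
  have hn4 : (4 : ℝ) ≤ (n : ℝ) := by exact_mod_cast hn
  have hp1 : 1 < p := by nlinarith [hq₀, hq, hn4]
  have hp1' : 0 < p - 1 := by linarith
  have hkey : a - q ≤ -κ := by
    have h2 : 2 / (p - 1) < κ + ((n : ℝ) + μ - 1) / 2 := by linarith
    have h3 : 2 < (κ + ((n : ℝ) + μ - 1) / 2) * (p - 1) := (div_lt_iff₀ hp1').mp h2
    rw [hq, ha_def]; nlinarith
  have hnegq : 0 < -q := by linarith
  have ha0 : a ≤ 0 := by linarith
  have hC : (0 : ℝ) < (2 : ℝ) ^ (-a) / (-q) := by positivity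
  refine ⟨(2 : ℝ) ^ (-a) / (-q), hC, ?_⟩
  intro y hy
  have hle : -y ≤ -y / 2 := by linarith
  have hjby : 0 < jb y := by unfold jb; positivity
  have hjby1 : 1 ≤ jb y := by unfold jb; have := abs_nonneg y; linarith
  set c : ℝ := (2 : ℝ) ^ (-a) * jb y ^ a with hc_def
  have hc0 : 0 ≤ c := by positivity
  -- the dominating function
  have hgint : IntegrableOn (fun x : ℝ => c * (x + y) ^ (-q - 1)) (Set.Ioc (-y) (-y / 2)) volume := by
    have h1 : IntervalIntegrable (fun u : ℝ => u ^ (-q - 1)) volume 0 (y / 2) :=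
      intervalIntegral.intervalIntegrable_rpow' (by linarith)
    have h2 := (h1.comp_add_right y).const_mul c
    have : (0 : ℝ) - y = -y := by ring
    rw [this] at h2
    have : y / 2 - y = -y / 2 := by ring
    rw [this] at h2
    exact h2.1
  -- pointwise bound on the interval
  have hpt : ∀ x ∈ Set.Ioc (-y) (-y / 2),
      jb x ^ a * jb (x + y) ^ (-q - 1 / 2) * (x + y) ^ (-(1 / 2 : ℝ))
        ≤ c * (x + y) ^ (-q - 1) := by
    intro x hx
    obtain ⟨hx1, hx2⟩ := hx
    have hxy : 0 < x + y := by linarith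
    have hjbx : jb y / 2 ≤ jb x := by
      have : y / 2 ≤ |x| := by
        rw [abs_of_nonpos (by linarith : x ≤ 0)]; linarith
      unfold jb; rw [abs_of_nonneg hy]; linarith
    have hb1 : jb x ^ a ≤ (2 : ℝ) ^ (-a) * jb y ^ a := by
      calc jb x ^ a ≤ (jb y / 2) ^ a :=
            Real.rpow_le_rpow_of_nonpos (by positivity) hjbx ha0
        _ = (2 : ℝ) ^ (-a) * jb y ^ a := by
            rw [Real.div_rpow hjby.le (by norm_num : (0:ℝ) ≤ 2),
              Real.rpow_neg (by norm_num : (0:ℝ) ≤ 2)]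
            ring
    have hb2 : jb (x + y) ^ (-q - 1 / 2) ≤ (x + y) ^ (-q - 1 / 2) := by
      have hle2 : x + y ≤ jb (x + y) := by
        unfold jb
        have := le_abs_self (x + y)
        linarith
      exact Real.rpow_le_rpow_of_nonpos hxy hle2 (by linarith)
    have hprod : (x + y) ^ (-q - 1 / 2) * (x + y) ^ (-(1 / 2 : ℝ)) = (x + y) ^ (-q - 1) := by
      rw [← Real.rpow_add hxy]; ring_nf
    calc jb x ^ a * jb (x + y) ^ (-q - 1 / 2) * (x + y) ^ (-(1 / 2 : ℝ))
        ≤ ((2 : ℝ) ^ (-a) * jb y ^ a) * ((x + y) ^ (-q - 1 / 2)) * (x + y) ^ (-(1 / 2 : ℝ)) := by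
          have h0 : (0 : ℝ) ≤ (x + y) ^ (-(1 / 2 : ℝ)) := Real.rpow_nonneg (le_of_lt hxy) _
          have h1 : (0 : ℝ) ≤ (x + y) ^ (-q - 1 / 2) := Real.rpow_nonneg (le_of_lt hxy) _
          have h2 : (0 : ℝ) ≤ jb x ^ a := Real.rpow_nonneg (by unfold jb; positivity) _
          have h3 : (0 : ℝ) ≤ jb (x + y) ^ (-q - 1 / 2) :=
            Real.rpow_nonneg (by unfold jb; positivity) _
          gcongr
      _ = c * (x + y) ^ (-q - 1) := by rw [hc_def, mul_assoc, hprod]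
  -- nonnegativity of integrand
  have hpt0 : ∀ x ∈ Set.Ioc (-y) (-y / 2),
      0 ≤ jb x ^ a * jb (x + y) ^ (-q - 1 / 2) * (x + y) ^ (-(1 / 2 : ℝ)) := by
    intro x hx
    obtain ⟨hx1, hx2⟩ := hx
    have hxy : 0 < x + y := by linarith
    have h2 : (0 : ℝ) ≤ jb x := by unfold jb; positivity
    have h3 : (0 : ℝ) ≤ jb (x + y) := by unfold jb; positivity
    positivity
  rw [intervalIntegral.integral_of_le hle]
  have hmono : (∫ x in Set.Ioc (-y) (-y / 2),
      jb x ^ a * jb (x + y) ^ (-q - 1 / 2) * (x + y) ^ (-(1 / 2 : ℝ)))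
      ≤ ∫ x in Set.Ioc (-y) (-y / 2), c * (x + y) ^ (-q - 1) := by
    apply integral_mono_of_nonneg
    · filter_upwards [ae_restrict_mem measurableSet_Ioc] with x hx
      exact hpt0 x hx
    · exact hgint
    · filter_upwards [ae_restrict_mem measurableSet_Ioc] with x hx
      exact hpt x hx
  have hcomp : (∫ x in Set.Ioc (-y) (-y / 2), c * (x + y) ^ (-q - 1))
      = c * ((y / 2) ^ (-q) / (-q)) := by
    rw [MeasureTheory.integral_const_mul]
    congr 1
    have h1 : (∫ x in Set.Ioc (-y) (-y / 2), (x + y) ^ (-q - 1))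
        = ∫ x in (-y)..(-y / 2), (x + y) ^ (-q - 1) :=
      (intervalIntegral.integral_of_le hle).symm
    rw [h1]
    have h2 := intervalIntegral.integral_comp_add_right (a := -y) (b := -y / 2)
      (fun u : ℝ => u ^ (-q - 1)) y
    rw [h2]
    have e1 : -y + y = (0 : ℝ) := by ring
    have e2 : -y / 2 + y = y / 2 := by ring
    rw [e1, e2]
    rw [integral_rpow (Or.inl (by linarith : (-1 : ℝ) < -q - 1))]
    rw [Real.zero_rpow (by linarith : -q - 1 + 1 ≠ 0)]
    have e3 : -q - 1 + 1 = -q := by ring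
    rw [e3]
    ring
  have hfinal : c * ((y / 2) ^ (-q) / (-q)) ≤ (2 : ℝ) ^ (-a) / (-q) * jb y ^ (-κ) := by
    have h1 : (y / 2) ^ (-q) ≤ jb y ^ (-q) := by
      apply Real.rpow_le_rpow (by linarith) _ (le_of_lt hnegq)
      unfold jb
      rw [abs_of_nonneg hy]; linarith
    have h2 : jb y ^ a * jb y ^ (-q) = jb y ^ (a + -q) := (Real.rpow_add hjby _ _).symm
    have h3 : jb y ^ (a + -q) ≤ jb y ^ (-κ) :=
      Real.rpow_le_rpow_of_exponent_le hjby1 (by linarith)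
    have h4 : jb y ^ a * (y / 2) ^ (-q) ≤ jb y ^ (-κ) := by
      calc jb y ^ a * (y / 2) ^ (-q) ≤ jb y ^ a * jb y ^ (-q) := by
            have : (0 : ℝ) ≤ jb y ^ a := Real.rpow_nonneg (le_of_lt hjby) _
            exact mul_le_mul_of_nonneg_left h1 this
        _ = jb y ^ (a + -q) := h2
        _ ≤ jb y ^ (-κ) := h3
    have h5 : (0 : ℝ) ≤ (2 : ℝ) ^ (-a) := by positivity
    have e1 : c * ((y / 2) ^ (-q) / (-q))
        = (2 : ℝ) ^ (-a) * (jb y ^ a * (y / 2) ^ (-q)) / (-q) := by rw [hc_def]; ring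
    have e2 : (2 : ℝ) ^ (-a) / (-q) * jb y ^ (-κ)
        = (2 : ℝ) ^ (-a) * jb y ^ (-κ) / (-q) := by ring
    rw [e1, e2]
    gcongr
  calc _ ≤ ∫ x in Set.Ioc (-y) (-y / 2), c * (x + y) ^ (-q - 1) := hmono
    _ = c * ((y / 2) ^ (-q) / (-q)) := hcomp
    _ ≤ _ := hfinal
end

section
/- Let n ≥ 2 be an integer and let μ > 0 be a real number. Then p_0(n+μ) < p_Fuj(μ) = 1 + 2/μ if and only if μ < M(n), where M(n) = ((n−1)/2)·(1 + √((n+7)/(n−1))). Equivalently, p_0(n+μ) < 1 + 2/μ if and only if μ² − (n−1)μ − 2(n−1) < 0. -/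
open Real

/-- The constant `M(n) = ((n-1)/2)(1 + √((n+7)/(n-1)))`. -/
noncomputable def Mconst (n : ℝ) : ℝ := ((n - 1) / 2) * (1 + Real.sqrt ((n + 7) / (n - 1)))

/-!
A quadratic with positive leading and negative constant coefficient has one root of each sign,
so on `[0, ∞)` it has the sign of `q - posRoot`. The Strauss exponent `p₀(N)` and `M(n)` are such
positive roots, and the Strauss quadratic of `N = n + μ` evaluated at `1 + 2/μ` is, up to the
factor `-2/μ²`, the quadratic `μ² - (n-1)μ - 2(n-1)` whose positive root is `M(n)`.
-/

namespace Quadratic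

noncomputable def posRoot (a b c : ℝ) : ℝ := (-b + √(discrim a b c)) / (2 * a)

noncomputable def negRoot (a b c : ℝ) : ℝ := (-b - √(discrim a b c)) / (2 * a)

variable {a b c : ℝ}

theorem eq_mul_sub_posRoot_mul_sub_negRoot (ha : a ≠ 0) (hD : 0 ≤ discrim a b c) (q : ℝ) :
    a * q ^ 2 + b * q + c = a * (q - posRoot a b c) * (q - negRoot a b c) := by
  have hs := Real.sq_sqrt hD
  unfold posRoot negRoot
  generalize √(discrim a b c) = s at hs ⊢
  rw [discrim] at hs
  field_simp
  linear_combination hs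

theorem discrim_pos (ha : 0 < a) (hc : c < 0) : 0 < discrim a b c := by
  rw [discrim]; nlinarith [sq_nonneg b]

theorem negRoot_neg (ha : 0 < a) (hc : c < 0) : negRoot a b c < 0 := by
  have hb : -b < √(discrim a b c) := Real.lt_sqrt_of_sq_lt (by rw [discrim]; nlinarith)
  exact div_neg_of_neg_of_pos (by linarith) (by positivity)

theorem eq_pos_mul_sub_posRoot (ha : 0 < a) (hc : c < 0) {q : ℝ} (hq : 0 ≤ q) :
    ∃ k > 0, a * q ^ 2 + b * q + c = k * (q - posRoot a b c) := by
  refine ⟨a * (q - negRoot a b c), mul_pos ha (by linarith [negRoot_neg (b := b) ha hc]), ?_⟩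
  rw [eq_mul_sub_posRoot_mul_sub_negRoot ha.ne' (discrim_pos ha hc).le]
  ring

theorem pos_iff_posRoot_lt (ha : 0 < a) (hc : c < 0) {q : ℝ} (hq : 0 ≤ q) :
    0 < a * q ^ 2 + b * q + c ↔ posRoot a b c < q := by
  obtain ⟨k, hk, h⟩ := eq_pos_mul_sub_posRoot (b := b) ha hc hq
  rw [h, mul_pos_iff_of_pos_left hk, sub_pos]

theorem neg_iff_lt_posRoot (ha : 0 < a) (hc : c < 0) {q : ℝ} (hq : 0 ≤ q) :
    a * q ^ 2 + b * q + c < 0 ↔ q < posRoot a b c := by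
  obtain ⟨k, hk, h⟩ := eq_pos_mul_sub_posRoot (b := b) ha hc hq
  rw [h, ← mul_zero k, mul_lt_mul_iff_right₀ hk, sub_neg]

end Quadratic

open Quadratic

theorem p0_eq_posRoot (N : ℝ) : p0 N = posRoot (N - 1) (-(N + 1)) (-2) := by
  rw [p0, posRoot, discrim]
  ring_nf

theorem Mconst_eq_posRoot {n : ℝ} (hn : 1 < n) :
    Mconst n = posRoot 1 (-(n - 1)) (-(2 * (n - 1))) := by
  have hn1 : 0 < n - 1 := sub_pos.mpr hn
  have hD : discrim 1 (-(n - 1)) (-(2 * (n - 1))) = (n - 1) ^ 2 * ((n + 7) / (n - 1)) := by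
    rw [discrim]
    field_simp
    ring
  rw [Mconst, posRoot, hD, Real.sqrt_mul (sq_nonneg _), Real.sqrt_sq hn1.le]
  ring

theorem strauss_quadratic_at_fujita (n : ℝ) {μ : ℝ} (hμ : μ ≠ 0) :
    (n + μ - 1) * (1 + 2 / μ) ^ 2 + -(n + μ + 1) * (1 + 2 / μ) + -2 =
      2 / μ ^ 2 * -(μ ^ 2 - (n - 1) * μ - 2 * (n - 1)) := by
  field_simp
  ring

theorem p0_add_lt_fujita_iff {n μ : ℝ} (hn : 1 < n) (hμ : 0 < μ) :
    p0 (n + μ) < 1 + 2 / μ ↔ μ ^ 2 - (n - 1) * μ - 2 * (n - 1) < 0 := by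
  rw [p0_eq_posRoot, ← pos_iff_posRoot_lt (by linarith) (by norm_num) (by positivity),
    strauss_quadratic_at_fujita n hμ.ne', mul_pos_iff_of_pos_left (by positivity), neg_pos]

theorem lt_Mconst_iff {n μ : ℝ} (hn : 1 < n) (hμ : 0 ≤ μ) :
    μ ^ 2 - (n - 1) * μ - 2 * (n - 1) < 0 ↔ μ < Mconst n := by
  rw [Mconst_eq_posRoot hn, ← neg_iff_lt_posRoot one_pos (by linarith) hμ]
  ring_nf

/-- `p_0(n+μ) < p_Fuj(μ)` if and only if `μ < M(n)`; equivalently,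
`p_0(n+μ) < 1 + 2/μ` iff `μ² - (n-1)μ - 2(n-1) < 0`. -/
theorem strauss_lt_fujita_iff (n : ℕ) (hn : 2 ≤ n) (μ : ℝ) (hμ : 0 < μ) :
    (p0 ((n : ℝ) + μ) < pFuj μ ↔ μ < Mconst n) ∧
    (p0 ((n : ℝ) + μ) < 1 + 2 / μ ↔
      μ ^ 2 - ((n : ℝ) - 1) * μ - 2 * ((n : ℝ) - 1) < 0) := by
  have hn' : (1 : ℝ) < n := by exact_mod_cast hn
  have h := p0_add_lt_fujita_iff hn' hμ
  exact ⟨h.trans (lt_Mconst_iff hn' hμ.le), h⟩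
end
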